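/- Let f : ℝⁿ → ℝ be convex and L-smooth, X ⊆ ℝⁿ nonempty closed convex, 0 < t ≤ 1/L. Suppose x ∈ X and x⁺ = proj_X(x - ĝ) where the inexact step ĝ satisfies t∇f(x) = ĝ + v for some v ∈ ℝⁿ. Then for every y ∈ X, f(x⁺) - f(y) ≤ (1/t)⟨(x - x⁺) + v, x⁺ - y⟩ + (1/(2t))‖x - x⁺‖². -/

import Mathlib

/-!
Three inequalities are summed. Smoothness with `L ≤ 1/t` gives the descent bound
`f x⁺ ≤ f x + ⟪∇f x, x⁺ - x⟫ + ‖x⁺ - x‖² / (2t)`, convexity gives `f x ≤ f y + ⟪∇f x, x - y⟫`,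
and the variational inequality of the projection, rewritten with `ĝ = t ∇f x - v`, gives
`t ⟪∇f x, x⁺ - y⟫ ≤ ⟪(x - x⁺) + v, x⁺ - y⟫`.
-/

open scoped RealInnerProductSpace

/-- `p` is the Euclidean projection of `z` onto the set `X`. -/
def IsProj {n : ℕ} (X : Set (EuclideanSpace ℝ (Fin n))) (z p : EuclideanSpace ℝ (Fin n)) : Prop :=
  p ∈ X ∧ ∀ y ∈ X, ‖p - z‖ ≤ ‖y - z‖

theorem IsProj.inner_sub_le_zero {n : ℕ} {X : Set (EuclideanSpace ℝ (Fin n))}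
    {z p : EuclideanSpace ℝ (Fin n)} (hp : IsProj X z p) (hX : Convex ℝ X) :
    ∀ w ∈ X, ⟪z - p, w - p⟫ ≤ 0 := by
  obtain ⟨hpX, hmin⟩ := hp
  have : Nonempty X := ⟨⟨p, hpX⟩⟩
  refine (norm_eq_iInf_iff_real_inner_le_zero hX hpX).mp (le_antisymm ?_ ?_)
  · refine le_ciInf fun w => ?_
    rw [norm_sub_rev z p, norm_sub_rev z]
    exact hmin w w.2
  · exact ciInf_le (f := fun w : X => ‖z - w‖)
      ⟨0, Set.forall_mem_range.2 fun _ => norm_nonneg _⟩ ⟨p, hpX⟩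

section InexactStep

variable {E : Type*} [NormedAddCommGroup E] [InnerProductSpace ℝ E]

theorem inner_le_of_inexact_proj_step {t : ℝ} (ht : 0 < t) {x xp y G gh v : E}
    (hopt : ⟪x - gh - xp, y - xp⟫ ≤ 0) (hv : t • G = gh + v) :
    ⟪G, xp - y⟫ ≤ 1 / t * ⟪(x - xp) + v, xp - y⟫ := by
  have hgh : x - gh - xp = (x - xp + v) - t • G := by rw [hv]; abel
  rw [hgh, inner_sub_left, real_inner_smul_left, ← neg_sub xp y,
    inner_neg_right, inner_neg_right] at hopt
  rw [div_mul_eq_mul_div, le_div_iff₀ ht]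
  linarith

theorem sub_le_inner_add_of_convex_of_smooth {f : E → ℝ} {g : E → E} {L : ℝ}
    (hcv : ∀ x y, 0 ≤ f x - f y - ⟪g y, x - y⟫)
    (hsm : ∀ x y, f x - f y - ⟪g y, x - y⟫ ≤ L / 2 * ‖x - y‖ ^ 2) (x xp y : E) :
    f xp - f y ≤ ⟪g x, xp - y⟫ + L / 2 * ‖x - xp‖ ^ 2 := by
  have hsplit : ⟪g x, xp - y⟫ = ⟪g x, xp - x⟫ - ⟪g x, y - x⟫ := by
    rw [← inner_sub_right, sub_sub_sub_cancel_right]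
  have hdescent := hsm xp x
  have hsupport := hcv y x
  rw [norm_sub_rev] at hdescent
  linarith

end InexactStep

theorem stmt6_general {n : ℕ} (f : EuclideanSpace ℝ (Fin n) → ℝ)
    (g : EuclideanSpace ℝ (Fin n) → EuclideanSpace ℝ (Fin n))
    (X : Set (EuclideanSpace ℝ (Fin n)))
    (hXcv : Convex ℝ X)
    (L t : ℝ) (ht : 0 < t) (ht' : t ≤ 1 / L)
    (hcv : ∀ x y, 0 ≤ f x - f y - ⟪g y, x - y⟫)
    (hsm : ∀ x y, f x - f y - ⟪g y, x - y⟫ ≤ L / 2 * ‖x - y‖ ^ 2)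
    (x gh v xp : EuclideanSpace ℝ (Fin n))
    (hproj : IsProj X (x - gh) xp)
    (hv : t • g x = gh + v) :
    ∀ y ∈ X, f xp - f y ≤ 1 / t * ⟪(x - xp) + v, xp - y⟫ + 1 / (2 * t) * ‖x - xp‖ ^ 2 := by
  intro y hy
  have hLt : L ≤ 1 / t := (le_one_div ht (one_div_pos.mp (ht.trans_le ht'))).mp ht'
  have hquad : L / 2 * ‖x - xp‖ ^ 2 ≤ 1 / (2 * t) * ‖x - xp‖ ^ 2 := by
    have : 1 / (2 * t) = (1 / t) / 2 := by ring
    rw [this]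
    gcongr
  have hinner := inner_le_of_inexact_proj_step ht (hproj.inner_sub_le_zero hXcv y hy) hv
  linarith [sub_le_inner_add_of_convex_of_smooth hcv hsm x xp y]

theorem stmt6 {n : ℕ} (f : EuclideanSpace ℝ (Fin n) → ℝ)
    (g : EuclideanSpace ℝ (Fin n) → EuclideanSpace ℝ (Fin n))
    (X : Set (EuclideanSpace ℝ (Fin n)))
    (hXne : X.Nonempty) (hXcl : IsClosed X) (hXcv : Convex ℝ X)
    (L t : ℝ) (hL : 0 < L) (ht : 0 < t) (ht' : t ≤ 1 / L)
    (hcv : ∀ x y, 0 ≤ f x - f y - ⟪g y, x - y⟫)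
    (hsm : ∀ x y, f x - f y - ⟪g y, x - y⟫ ≤ L / 2 * ‖x - y‖ ^ 2)
    (x gh v xp : EuclideanSpace ℝ (Fin n)) (hxX : x ∈ X)
    (hproj : IsProj X (x - gh) xp)
    (hv : t • g x = gh + v) :
    ∀ y ∈ X, f xp - f y ≤ 1 / t * ⟪(x - xp) + v, xp - y⟫ + 1 / (2 * t) * ‖x - xp‖ ^ 2 :=
  stmt6_general f g X hXcv L t ht ht' hcv hsm x gh v xp hproj hv
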